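/- Let C, λ, M, O be finite random variables with O conditionally independent of C given (λ, M). If I(C; O | λ) > 0, then H(M) ≥ I(C; O | λ) > 0; in particular M cannot be deterministic (constant almost surely). -/
import Mathlib


open Real Finset

/-- Probability that the random variable `X` takes the value `x`, under the
finite probability mass function `p` on the sample space `Ω`. -/
noncomputable def pr {Ω α : Type} [Fintype Ω] [DecidableEq α]
    (p : Ω → ℝ) (X : Ω → α) (x : α) : ℝ :=
  ∑ ω, if X ω = x then p ω else 0

/-- Probability of an event `E`. -/
noncomputable def prE {Ω : Type} [Fintype Ω]
    (p : Ω → ℝ) (E : Ω → Prop) [DecidablePred E] : ℝ :=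
  ∑ ω, if E ω then p ω else 0

/-- `p` is a probability mass function on the finite sample space. -/
def IsPMF {Ω : Type} [Fintype Ω] (p : Ω → ℝ) : Prop :=
  (∀ ω, 0 ≤ p ω) ∧ ∑ ω, p ω = 1

/-- Shannon entropy of the finite random variable `X`. -/
noncomputable def Hent {Ω α : Type} [Fintype Ω] [Fintype α] [DecidableEq α]
    (p : Ω → ℝ) (X : Ω → α) : ℝ :=
  ∑ x, Real.negMulLog (pr p X x)

/-- Conditional Shannon entropy `H(X | Y) = H(X,Y) - H(Y)`. -/
noncomputable def condH {Ω α β : Type} [Fintype Ω] [Fintype α] [DecidableEq α]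
    [Fintype β] [DecidableEq β] (p : Ω → ℝ) (X : Ω → α) (Y : Ω → β) : ℝ :=
  Hent p (fun ω => (X ω, Y ω)) - Hent p Y

/-- Mutual information `I(X;Y) = H(X) + H(Y) - H(X,Y)`. -/
noncomputable def mi {Ω α β : Type} [Fintype Ω] [Fintype α] [DecidableEq α]
    [Fintype β] [DecidableEq β] (p : Ω → ℝ) (X : Ω → α) (Y : Ω → β) : ℝ :=
  Hent p X + Hent p Y - Hent p (fun ω => (X ω, Y ω))

/-- Conditional mutual information `I(X;Y | Z) = H(X|Z) + H(Y|Z) - H(X,Y|Z)`. -/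
noncomputable def cmi {Ω α β γ : Type} [Fintype Ω] [Fintype α] [DecidableEq α]
    [Fintype β] [DecidableEq β] [Fintype γ] [DecidableEq γ]
    (p : Ω → ℝ) (X : Ω → α) (Y : Ω → β) (Z : Ω → γ) : ℝ :=
  condH p X Z + condH p Y Z - condH p (fun ω => (X ω, Y ω)) Z

/-- `X ⟂ Y | Z`: conditional independence of `X` and `Y` given `Z`, expressed in
the multiplicative form `P(X=x, Y=y, Z=z) ⬝ P(Z=z) = P(X=x,Z=z) ⬝ P(Y=y,Z=z)`,
which is equivalent to `p(x | y, z) = p(x | z)` whenever defined. -/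
def CondIndep {Ω α β γ : Type} [Fintype Ω] [DecidableEq α] [DecidableEq β] [DecidableEq γ]
    (p : Ω → ℝ) (X : Ω → α) (Y : Ω → β) (Z : Ω → γ) : Prop :=
  ∀ x y z,
    pr p (fun ω => (X ω, Y ω, Z ω)) (x, y, z) * pr p Z z
      = pr p (fun ω => (X ω, Z ω)) (x, z) * pr p (fun ω => (Y ω, Z ω)) (y, z)

/-- Independence of two finite random variables. -/
def Indep {Ω α β : Type} [Fintype Ω] [DecidableEq α] [DecidableEq β]
    (p : Ω → ℝ) (X : Ω → α) (Y : Ω → β) : Prop :=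
  ∀ x y, pr p (fun ω => (X ω, Y ω)) (x, y) = pr p X x * pr p Y y
/-! ### Auxiliary lemmas -/

section Aux

-- sum reorderings for triple sums
private lemma sum3_132 {α β γ : Type} [Fintype α] [Fintype β] [Fintype γ]
    (f : α → β → γ → ℝ) :
    ∑ x : α, ∑ z : γ, ∑ y : β, f x y z = ∑ x, ∑ y, ∑ z, f x y z :=
  Finset.sum_congr rfl fun _ _ => Finset.sum_comm

private lemma sum3_213 {α β γ : Type} [Fintype α] [Fintype β] [Fintype γ]
    (f : α → β → γ → ℝ) :
    ∑ y : β, ∑ z : γ, ∑ x : α, f x y z = ∑ x, ∑ y, ∑ z, f x y z :=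
  (Finset.sum_congr rfl fun _ _ => Finset.sum_comm).trans Finset.sum_comm

private lemma sum3_312 {α β γ : Type} [Fintype α] [Fintype β] [Fintype γ]
    (f : α → β → γ → ℝ) :
    ∑ z : γ, ∑ x : α, ∑ y : β, f x y z = ∑ x, ∑ y, ∑ z, f x y z :=
  Finset.sum_comm.trans (Finset.sum_congr rfl fun _ _ => Finset.sum_comm)

private lemma nml_sum_mul {ι : Type} [Fintype ι] (f : ι → ℝ) :
    Real.negMulLog (∑ i, f i) = ∑ i, f i * (-Real.log (∑ j, f j)) := by
  rw [← Finset.sum_mul, Real.negMulLog]; ring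

/-- Termwise bound for CMI nonnegativity. -/
private lemma term_bound (q s t r : ℝ) (hq : 0 ≤ q) (hqs : q ≤ s) (hqt : q ≤ t)
    (hqr : q ≤ r) :
    q - s * t / r ≤
      q * (-Real.log s) + q * (-Real.log t) - Real.negMulLog q - q * (-Real.log r) := by
  rcases eq_or_lt_of_le hq with h | h
  · have h0 : q = 0 := h.symm
    subst h0
    simp only [Real.negMulLog_zero, zero_mul, add_zero, sub_zero, zero_sub, zero_add, sub_self]
    have : 0 ≤ s * t / r := by
      apply div_nonneg (mul_nonneg (le_trans hq hqs) (le_trans hq hqt)) (le_trans hq hqr)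
    linarith
  · have hs : 0 < s := lt_of_lt_of_le h hqs
    have ht : 0 < t := lt_of_lt_of_le h hqt
    have hr : 0 < r := lt_of_lt_of_le h hqr
    have hlog : Real.log (s * t / (r * q)) ≤ s * t / (r * q) - 1 :=
      Real.log_le_sub_one_of_pos (by positivity)
    have hexp : Real.log (s * t / (r * q))
        = Real.log s + Real.log t - Real.log r - Real.log q := by
      rw [Real.log_div (by positivity) (by positivity),
        Real.log_mul hs.ne' ht.ne', Real.log_mul hr.ne' h.ne']
      ring
    have hq2 : q * (s * t / (r * q)) = s * t / r := by
      field_simp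
    have key : q * (Real.log s + Real.log t - Real.log r - Real.log q) ≤ s * t / r - q := by
      calc q * (Real.log s + Real.log t - Real.log r - Real.log q)
          = q * Real.log (s * t / (r * q)) := by rw [hexp]
        _ ≤ q * (s * t / (r * q) - 1) := mul_le_mul_of_nonneg_left hlog hq
        _ = s * t / r - q := by rw [mul_sub, hq2, mul_one]
    have hring : q * (-Real.log s) + q * (-Real.log t) - Real.negMulLog q - q * (-Real.log r)
        = -(q * (Real.log s + Real.log t - Real.log r - Real.log q)) := by
      rw [Real.negMulLog]; ring
    linarith

/-- Abstract CMI nonnegativity: `H(X,Z) + H(Y,Z) ≥ H(X,Y,Z) + H(Z)`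
for any (sub)probability weights. -/
private lemma core_nonneg {α β γ : Type} [Fintype α] [Fintype β] [Fintype γ]
    (q : α → β → γ → ℝ) (hq : ∀ x y z, 0 ≤ q x y z) :
    ∑ x, ∑ y, ∑ z, Real.negMulLog (q x y z) + ∑ z, Real.negMulLog (∑ x, ∑ y, q x y z)
      ≤ (∑ x, ∑ z, Real.negMulLog (∑ y, q x y z))
        + ∑ y, ∑ z, Real.negMulLog (∑ x, q x y z) := by
  have hqs : ∀ x y z, q x y z ≤ ∑ y', q x y' z := fun x y z =>
    Finset.single_le_sum (fun y' _ => hq x y' z) (Finset.mem_univ y)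
  have hqt : ∀ x y z, q x y z ≤ ∑ x', q x' y z := fun x y z =>
    Finset.single_le_sum (fun x' _ => hq x' y z) (Finset.mem_univ x)
  have hsnn : ∀ x z, 0 ≤ ∑ y, q x y z := fun x z =>
    Finset.sum_nonneg fun y _ => hq x y z
  have htnn : ∀ y z, 0 ≤ ∑ x, q x y z := fun y z =>
    Finset.sum_nonneg fun x _ => hq x y z
  have hrnn : ∀ z, 0 ≤ ∑ x, ∑ y, q x y z := fun z =>
    Finset.sum_nonneg fun x _ => hsnn x z
  have hqr : ∀ x y z, q x y z ≤ ∑ x', ∑ y', q x' y' z := fun x y z =>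
    le_trans (hqs x y z)
      (Finset.single_le_sum (fun x' _ => hsnn x' z) (Finset.mem_univ x))
  have hA : (∑ x, ∑ z, Real.negMulLog (∑ y, q x y z))
      = ∑ x, ∑ y, ∑ z, q x y z * (-Real.log (∑ y', q x y' z)) := by
    refine Finset.sum_congr rfl fun x _ => ?_
    exact (Finset.sum_congr rfl fun z _ =>
      nml_sum_mul (fun y => q x y z)).trans Finset.sum_comm
  have hB : (∑ y, ∑ z, Real.negMulLog (∑ x, q x y z))
      = ∑ x, ∑ y, ∑ z, q x y z * (-Real.log (∑ x', q x' y z)) := by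
    refine Eq.trans ?_ (sum3_213 fun x y z => q x y z * (-Real.log (∑ x', q x' y z)))
    exact Finset.sum_congr rfl fun y _ => Finset.sum_congr rfl fun z _ =>
      nml_sum_mul (fun x => q x y z)
  have hC : (∑ z, Real.negMulLog (∑ x, ∑ y, q x y z))
      = ∑ x, ∑ y, ∑ z, q x y z * (-Real.log (∑ x', ∑ y', q x' y' z)) := by
    refine Eq.trans ?_ (sum3_312 fun x y z => q x y z * (-Real.log (∑ x', ∑ y', q x' y' z)))
    refine Finset.sum_congr rfl fun z _ => ?_
    rw [nml_sum_mul (fun x => ∑ y, q x y z)]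
    exact Finset.sum_congr rfl fun x _ => Finset.sum_mul _ _ _
  rw [hA, hB, hC]
  -- termwise bound
  have hterm : ∑ x, ∑ y, ∑ z, (q x y z - (∑ y', q x y' z) * (∑ x', q x' y z) / (∑ x', ∑ y', q x' y' z))
      ≤ ∑ x, ∑ y, ∑ z, (q x y z * (-Real.log (∑ y', q x y' z))
          + q x y z * (-Real.log (∑ x', q x' y z))
          - Real.negMulLog (q x y z)
          - q x y z * (-Real.log (∑ x', ∑ y', q x' y' z))) := by
    refine Finset.sum_le_sum fun x _ => Finset.sum_le_sum fun y _ => Finset.sum_le_sum fun z _ => ?_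
    exact term_bound (q x y z) _ _ _ (hq x y z) (hqs x y z) (hqt x y z) (hqr x y z)
  -- the lower bound sum is nonneg
  have hlb : 0 ≤ ∑ x, ∑ y, ∑ z, (q x y z - (∑ y', q x y' z) * (∑ x', q x' y z) / (∑ x', ∑ y', q x' y' z)) := by
    simp only [Finset.sum_sub_distrib]
    have hmass : ∑ x, ∑ y, ∑ z, (∑ y', q x y' z) * (∑ x', q x' y z) / (∑ x', ∑ y', q x' y' z)
        ≤ ∑ x, ∑ y, ∑ z, q x y z := by
      rw [← sum3_312 fun x y z => (∑ y', q x y' z) * (∑ x', q x' y z) / (∑ x', ∑ y', q x' y' z),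
        ← sum3_312 q]
      refine Finset.sum_le_sum fun z _ => ?_
      have hzz : ∑ y, ∑ x, q x y z = ∑ x, ∑ y, q x y z := Finset.sum_comm
      have : ∑ x, ∑ y, (∑ y', q x y' z) * (∑ x', q x' y z) / (∑ x', ∑ y', q x' y' z)
          = (∑ x, ∑ y', q x y' z) * ((∑ y, ∑ x', q x' y z) / (∑ x', ∑ y', q x' y' z)) := by
        rw [Finset.sum_div, Finset.sum_mul_sum Finset.univ Finset.univ (fun x => ∑ y', q x y' z)
          (fun y => (∑ x', q x' y z) / (∑ x', ∑ y', q x' y' z))]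
        exact Finset.sum_congr rfl fun x _ => Finset.sum_congr rfl fun y _ =>
          (mul_div_assoc _ _ _)
      rw [this, hzz]
      rcases eq_or_lt_of_le (hrnn z) with h0 | h0
      · rw [← h0]
        simp
      · rw [div_self h0.ne', mul_one]
    linarith
  have := le_trans hlb hterm
  simp only [Finset.sum_add_distrib, Finset.sum_sub_distrib] at this
  linarith

/-- Abstract equality case: under conditional independence,
`H(X,Y,Z) = H(X,Z) + H(Y,Z) - H(Z)`. -/
private lemma core_eq {α β γ : Type} [Fintype α] [Fintype β] [Fintype γ]
    (q : α → β → γ → ℝ) (hq : ∀ x y z, 0 ≤ q x y z)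
    (hind : ∀ x y z, q x y z * (∑ x', ∑ y', q x' y' z)
      = (∑ y', q x y' z) * (∑ x', q x' y z)) :
    ∑ x, ∑ y, ∑ z, Real.negMulLog (q x y z)
      = (∑ x, ∑ z, Real.negMulLog (∑ y, q x y z))
        + (∑ y, ∑ z, Real.negMulLog (∑ x, q x y z))
        - ∑ z, Real.negMulLog (∑ x, ∑ y, q x y z) := by
  have hqs : ∀ x y z, q x y z ≤ ∑ y', q x y' z := fun x y z =>
    Finset.single_le_sum (fun y' _ => hq x y' z) (Finset.mem_univ y)
  have hqt : ∀ x y z, q x y z ≤ ∑ x', q x' y z := fun x y z =>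
    Finset.single_le_sum (fun x' _ => hq x' y z) (Finset.mem_univ x)
  have hsnn : ∀ x z, 0 ≤ ∑ y, q x y z := fun x z =>
    Finset.sum_nonneg fun y _ => hq x y z
  have hqr : ∀ x y z, q x y z ≤ ∑ x', ∑ y', q x' y' z := fun x y z =>
    le_trans (hqs x y z)
      (Finset.single_le_sum (fun x' _ => hsnn x' z) (Finset.mem_univ x))
  have hA : (∑ x, ∑ z, Real.negMulLog (∑ y, q x y z))
      = ∑ x, ∑ y, ∑ z, q x y z * (-Real.log (∑ y', q x y' z)) := by
    refine Finset.sum_congr rfl fun x _ => ?_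
    exact (Finset.sum_congr rfl fun z _ =>
      nml_sum_mul (fun y => q x y z)).trans Finset.sum_comm
  have hB : (∑ y, ∑ z, Real.negMulLog (∑ x, q x y z))
      = ∑ x, ∑ y, ∑ z, q x y z * (-Real.log (∑ x', q x' y z)) := by
    refine Eq.trans ?_ (sum3_213 fun x y z => q x y z * (-Real.log (∑ x', q x' y z)))
    exact Finset.sum_congr rfl fun y _ => Finset.sum_congr rfl fun z _ =>
      nml_sum_mul (fun x => q x y z)
  have hC : (∑ z, Real.negMulLog (∑ x, ∑ y, q x y z))
      = ∑ x, ∑ y, ∑ z, q x y z * (-Real.log (∑ x', ∑ y', q x' y' z)) := by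
    refine Eq.trans ?_ (sum3_312 fun x y z => q x y z * (-Real.log (∑ x', ∑ y', q x' y' z)))
    refine Finset.sum_congr rfl fun z _ => ?_
    rw [nml_sum_mul (fun x => ∑ y, q x y z)]
    exact Finset.sum_congr rfl fun x _ => Finset.sum_mul _ _ _
  rw [hA, hB, hC]
  have hterm : ∀ x y z, Real.negMulLog (q x y z)
      = q x y z * (-Real.log (∑ y', q x y' z))
        + q x y z * (-Real.log (∑ x', q x' y z))
        - q x y z * (-Real.log (∑ x', ∑ y', q x' y' z)) := by
    intro x y z
    by_cases h : q x y z = 0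
    · simp [h, Real.negMulLog_zero]
    · have h0 : 0 < q x y z := (hq x y z).lt_of_ne (Ne.symm h)
      have hs : 0 < ∑ y', q x y' z := lt_of_lt_of_le h0 (hqs x y z)
      have ht : 0 < ∑ x', q x' y z := lt_of_lt_of_le h0 (hqt x y z)
      have hr : 0 < ∑ x', ∑ y', q x' y' z := lt_of_lt_of_le h0 (hqr x y z)
      have hq_eq : q x y z = (∑ y', q x y' z) * (∑ x', q x' y z) / (∑ x', ∑ y', q x' y' z) := by
        rw [eq_div_iff hr.ne']
        exact hind x y z
      have hlog : Real.log (q x y z)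
          = Real.log (∑ y', q x y' z) + Real.log (∑ x', q x' y z)
            - Real.log (∑ x', ∑ y', q x' y' z) := by
        rw [hq_eq, Real.log_div (by positivity) hr.ne', Real.log_mul hs.ne' ht.ne']
      rw [Real.negMulLog, hlog]
      ring
  calc ∑ x, ∑ y, ∑ z, Real.negMulLog (q x y z)
      = ∑ x, ∑ y, ∑ z, (q x y z * (-Real.log (∑ y', q x y' z))
          + q x y z * (-Real.log (∑ x', q x' y z))
          - q x y z * (-Real.log (∑ x', ∑ y', q x' y' z))) :=
        Finset.sum_congr rfl fun x _ => Finset.sum_congr rfl fun y _ =>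
          Finset.sum_congr rfl fun z _ => hterm x y z
    _ = _ := by simp only [Finset.sum_add_distrib, Finset.sum_sub_distrib]

/-- Abstract: `H(Y) ≤ H(X,Y)`. -/
private lemma core_pair {α β : Type} [Fintype α] [Fintype β]
    (q : α → β → ℝ) (hq : ∀ x y, 0 ≤ q x y) :
    ∑ y, Real.negMulLog (∑ x, q x y) ≤ ∑ x, ∑ y, Real.negMulLog (q x y) := by
  have key : ∀ y, Real.negMulLog (∑ x, q x y) ≤ ∑ x, Real.negMulLog (q x y) := by
    intro y
    calc Real.negMulLog (∑ x, q x y)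
        = ∑ x, q x y * (-Real.log (∑ x', q x' y)) := nml_sum_mul _
      _ ≤ ∑ x, Real.negMulLog (q x y) := by
          refine Finset.sum_le_sum fun x _ => ?_
          by_cases h : q x y = 0
          · simp [h, Real.negMulLog_zero]
          · have h0 : 0 < q x y := (hq x y).lt_of_ne (Ne.symm h)
            have hS : q x y ≤ ∑ x', q x' y :=
              Finset.single_le_sum (fun i _ => hq i y) (Finset.mem_univ x)
            have hl : Real.log (q x y) ≤ Real.log (∑ x', q x' y) := Real.log_le_log h0 hS
            have := mul_le_mul_of_nonneg_left hl (le_of_lt h0)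
            rw [Real.negMulLog]
            nlinarith
  calc ∑ y, Real.negMulLog (∑ x, q x y) ≤ ∑ y, ∑ x, Real.negMulLog (q x y) :=
        Finset.sum_le_sum fun y _ => key y
    _ = ∑ x, ∑ y, Real.negMulLog (q x y) := Finset.sum_comm

end Aux
section Bridge

variable {Ω α β γ : Type} [Fintype Ω]

private lemma pr_nonneg [DecidableEq α] {p : Ω → ℝ} (hp : ∀ ω, 0 ≤ p ω)
    (X : Ω → α) (x : α) : 0 ≤ pr p X x :=
  Finset.sum_nonneg fun ω _ => by by_cases h : X ω = x <;> simp [h, hp ω]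

private lemma pr_sum_eq_one [Fintype α] [DecidableEq α] {p : Ω → ℝ} (hp : IsPMF p)
    (X : Ω → α) : ∑ x, pr p X x = 1 := by
  unfold pr
  rw [Finset.sum_comm]
  calc ∑ ω, ∑ x, (if X ω = x then p ω else 0)
      = ∑ ω, p ω := by
        refine Finset.sum_congr rfl fun ω _ => ?_
        rw [Finset.sum_ite_eq Finset.univ (X ω) (fun _ => p ω)]
        simp
    _ = 1 := hp.2

private lemma marg_fst [Fintype β] [DecidableEq α] [DecidableEq β]
    (p : Ω → ℝ) (X : Ω → α) (Y : Ω → β) (x : α) :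
    pr p X x = ∑ y, pr p (fun ω => (X ω, Y ω)) (x, y) := by
  unfold pr
  rw [Finset.sum_comm]
  refine Finset.sum_congr rfl fun ω _ => ?_
  by_cases h : X ω = x
  · simp [h, Prod.ext_iff, Finset.sum_ite_eq]
  · simp [h, Prod.ext_iff]

private lemma marg_snd [Fintype α] [DecidableEq α] [DecidableEq β]
    (p : Ω → ℝ) (X : Ω → α) (Y : Ω → β) (y : β) :
    pr p Y y = ∑ x, pr p (fun ω => (X ω, Y ω)) (x, y) := by
  unfold pr
  rw [Finset.sum_comm]
  refine Finset.sum_congr rfl fun ω _ => ?_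
  by_cases h : Y ω = y
  · simp [h, Prod.ext_iff, Finset.sum_ite_eq]
  · simp [h, Prod.ext_iff]

private lemma marg_XZ [Fintype β] [DecidableEq α] [DecidableEq β] [DecidableEq γ]
    (p : Ω → ℝ) (X : Ω → α) (Y : Ω → β) (Z : Ω → γ) (x : α) (z : γ) :
    pr p (fun ω => (X ω, Z ω)) (x, z) = ∑ y, pr p (fun ω => (X ω, Y ω, Z ω)) (x, y, z) := by
  unfold pr
  rw [Finset.sum_comm]
  refine Finset.sum_congr rfl fun ω _ => ?_
  by_cases hx : X ω = x <;> by_cases hz : Z ω = z <;>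
    simp [hx, hz, Prod.ext_iff, Finset.sum_ite_eq]

private lemma marg_YZ [Fintype α] [DecidableEq α] [DecidableEq β] [DecidableEq γ]
    (p : Ω → ℝ) (X : Ω → α) (Y : Ω → β) (Z : Ω → γ) (y : β) (z : γ) :
    pr p (fun ω => (Y ω, Z ω)) (y, z) = ∑ x, pr p (fun ω => (X ω, Y ω, Z ω)) (x, y, z) := by
  unfold pr
  rw [Finset.sum_comm]
  refine Finset.sum_congr rfl fun ω _ => ?_
  by_cases hy : Y ω = y <;> by_cases hz : Z ω = z <;>
    simp [hy, hz, Prod.ext_iff, Finset.sum_ite_eq]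

private lemma marg_Z [Fintype α] [Fintype β] [DecidableEq α] [DecidableEq β] [DecidableEq γ]
    (p : Ω → ℝ) (X : Ω → α) (Y : Ω → β) (Z : Ω → γ) (z : γ) :
    pr p Z z = ∑ x, ∑ y, pr p (fun ω => (X ω, Y ω, Z ω)) (x, y, z) := by
  unfold pr
  rw [show (∑ x, ∑ y, ∑ ω, (if (X ω, Y ω, Z ω) = (x, y, z) then p ω else 0))
      = ∑ ω, ∑ x, ∑ y, (if (X ω, Y ω, Z ω) = (x, y, z) then p ω else 0) from
    (sum3_312 fun x y ω => (if (X ω, Y ω, Z ω) = (x, y, z) then p ω else 0)).symm]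
  refine Finset.sum_congr rfl fun ω _ => ?_
  by_cases hz : Z ω = z <;>
    simp [hz, Prod.ext_iff, ite_and, Finset.sum_ite_eq]

private lemma Hent_pair [Fintype α] [Fintype β] [DecidableEq α] [DecidableEq β]
    (p : Ω → ℝ) (X : Ω → α) (Y : Ω → β) :
    Hent p (fun ω => (X ω, Y ω)) = ∑ x, ∑ y, Real.negMulLog (pr p (fun ω => (X ω, Y ω)) (x, y)) := by
  rw [Hent, Fintype.sum_prod_type]

private lemma Hent_triple [Fintype α] [Fintype β] [Fintype γ]
    [DecidableEq α] [DecidableEq β] [DecidableEq γ]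
    (p : Ω → ℝ) (X : Ω → α) (Y : Ω → β) (Z : Ω → γ) :
    Hent p (fun ω => (X ω, Y ω, Z ω))
      = ∑ x, ∑ y, ∑ z, Real.negMulLog (pr p (fun ω => (X ω, Y ω, Z ω)) (x, y, z)) := by
  rw [Hent, Fintype.sum_prod_type]
  exact Finset.sum_congr rfl fun x _ => Fintype.sum_prod_type _

private lemma Hent_relabel [Fintype α] [Fintype β] [DecidableEq α] [DecidableEq β]
    (p : Ω → ℝ) (X : Ω → α) (g : α → β) (hg : Function.Injective g)
    (Y : Ω → β) (hXY : ∀ ω, g (X ω) = Y ω) : Hent p Y = Hent p X := by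
  have hpr : ∀ a, pr p Y (g a) = pr p X a := by
    intro a
    unfold pr
    refine Finset.sum_congr rfl fun ω _ => ?_
    refine if_congr ?_ rfl rfl
    rw [← hXY ω]
    exact ⟨fun h => hg h, fun h => by rw [h]⟩
  have hpr0 : ∀ b, (∀ a, g a ≠ b) → pr p Y b = 0 := by
    intro b hb
    unfold pr
    refine Finset.sum_eq_zero fun ω _ => ?_
    rw [if_neg]
    rw [← hXY ω]
    exact hb (X ω)
  rw [Hent, Hent]
  rw [← Finset.sum_subset (Finset.subset_univ (Finset.univ.image g))]
  · rw [Finset.sum_image (fun a _ a' _ h => hg h)]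
    exact Finset.sum_congr rfl fun a _ => by rw [hpr a]
  · intro b _ hb
    have : ∀ a, g a ≠ b := by
      intro a ha
      exact hb (Finset.mem_image.2 ⟨a, Finset.mem_univ a, ha⟩)
    rw [hpr0 b this, Real.negMulLog_zero]

private lemma cmi_expand [Fintype α] [Fintype β] [Fintype γ]
    [DecidableEq α] [DecidableEq β] [DecidableEq γ]
    (p : Ω → ℝ) (X : Ω → α) (Y : Ω → β) (Z : Ω → γ) :
    cmi p X Y Z = Hent p (fun ω => (X ω, Z ω)) + Hent p (fun ω => (Y ω, Z ω))
      - Hent p (fun ω => (X ω, Y ω, Z ω)) - Hent p Z := by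
  have h : Hent p (fun ω => ((X ω, Y ω), Z ω)) = Hent p (fun ω => (X ω, Y ω, Z ω)) := by
    refine (Hent_relabel p (fun ω => ((X ω, Y ω), Z ω))
      (fun u => (u.1.1, u.1.2, u.2)) ?_ _ (fun ω => rfl)).symm
    rintro ⟨⟨a1, a2⟩, a3⟩ ⟨⟨b1, b2⟩, b3⟩ h
    simp only [Prod.mk.injEq] at h ⊢
    tauto
  simp only [cmi, condH]
  linarith [h]

private lemma cmi_nonneg' [Fintype α] [Fintype β] [Fintype γ]
    [DecidableEq α] [DecidableEq β] [DecidableEq γ]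
    {p : Ω → ℝ} (hp : ∀ ω, 0 ≤ p ω) (X : Ω → α) (Y : Ω → β) (Z : Ω → γ) :
    0 ≤ cmi p X Y Z := by
  have e := cmi_expand p X Y Z
  have h1 : Hent p (fun ω => (X ω, Z ω))
      = ∑ x, ∑ z, Real.negMulLog (∑ y, pr p (fun ω => (X ω, Y ω, Z ω)) (x, y, z)) := by
    rw [Hent_pair]
    exact Finset.sum_congr rfl fun x _ => Finset.sum_congr rfl fun z _ => by
      rw [marg_XZ p X Y Z x z]
  have h2 : Hent p (fun ω => (Y ω, Z ω))
      = ∑ y, ∑ z, Real.negMulLog (∑ x, pr p (fun ω => (X ω, Y ω, Z ω)) (x, y, z)) := by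
    rw [Hent_pair]
    exact Finset.sum_congr rfl fun y _ => Finset.sum_congr rfl fun z _ => by
      rw [marg_YZ p X Y Z y z]
  have h3 : Hent p Z
      = ∑ z, Real.negMulLog (∑ x, ∑ y, pr p (fun ω => (X ω, Y ω, Z ω)) (x, y, z)) := by
    rw [Hent]
    exact Finset.sum_congr rfl fun z _ => by rw [marg_Z p X Y Z z]
  have h4 := Hent_triple p X Y Z
  have core := core_nonneg (fun x y z => pr p (fun ω => (X ω, Y ω, Z ω)) (x, y, z))
    (fun x y z => pr_nonneg hp _ _)
  rw [e, h1, h2, h3, h4]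
  linarith [core]

private lemma cmi_eq_zero [Fintype α] [Fintype β] [Fintype γ]
    [DecidableEq α] [DecidableEq β] [DecidableEq γ]
    {p : Ω → ℝ} (hp : ∀ ω, 0 ≤ p ω) (X : Ω → α) (Y : Ω → β) (Z : Ω → γ)
    (h : CondIndep p X Y Z) : cmi p X Y Z = 0 := by
  have e := cmi_expand p X Y Z
  have h1 : Hent p (fun ω => (X ω, Z ω))
      = ∑ x, ∑ z, Real.negMulLog (∑ y, pr p (fun ω => (X ω, Y ω, Z ω)) (x, y, z)) := by
    rw [Hent_pair]
    exact Finset.sum_congr rfl fun x _ => Finset.sum_congr rfl fun z _ => by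
      rw [marg_XZ p X Y Z x z]
  have h2 : Hent p (fun ω => (Y ω, Z ω))
      = ∑ y, ∑ z, Real.negMulLog (∑ x, pr p (fun ω => (X ω, Y ω, Z ω)) (x, y, z)) := by
    rw [Hent_pair]
    exact Finset.sum_congr rfl fun y _ => Finset.sum_congr rfl fun z _ => by
      rw [marg_YZ p X Y Z y z]
  have h3 : Hent p Z
      = ∑ z, Real.negMulLog (∑ x, ∑ y, pr p (fun ω => (X ω, Y ω, Z ω)) (x, y, z)) := by
    rw [Hent]
    exact Finset.sum_congr rfl fun z _ => by rw [marg_Z p X Y Z z]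
  have h4 := Hent_triple p X Y Z
  have hind : ∀ x y z, pr p (fun ω => (X ω, Y ω, Z ω)) (x, y, z)
      * (∑ x', ∑ y', pr p (fun ω => (X ω, Y ω, Z ω)) (x', y', z))
      = (∑ y', pr p (fun ω => (X ω, Y ω, Z ω)) (x, y', z))
        * (∑ x', pr p (fun ω => (X ω, Y ω, Z ω)) (x', y, z)) := by
    intro x y z
    rw [← marg_Z p X Y Z z, ← marg_XZ p X Y Z x z, ← marg_YZ p X Y Z y z]
    exact h x y z
  have core := core_eq (fun x y z => pr p (fun ω => (X ω, Y ω, Z ω)) (x, y, z))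
    (fun x y z => pr_nonneg hp _ _) hind
  rw [e, h1, h2, h3, h4]
  linarith [core]

private lemma condIndep_symm [DecidableEq α] [DecidableEq β] [DecidableEq γ]
    {p : Ω → ℝ} {X : Ω → α} {Y : Ω → β} {Z : Ω → γ}
    (h : CondIndep p X Y Z) : CondIndep p Y X Z := by
  intro y x z
  have hswap : pr p (fun ω => (Y ω, X ω, Z ω)) (y, x, z)
      = pr p (fun ω => (X ω, Y ω, Z ω)) (x, y, z) := by
    unfold pr
    refine Finset.sum_congr rfl fun ω _ => ?_
    refine if_congr ?_ rfl rfl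
    simp only [Prod.mk.injEq]
    tauto
  rw [hswap, h x y z]
  ring

private lemma Hent_snd_le [Fintype α] [Fintype β] [DecidableEq α] [DecidableEq β]
    {p : Ω → ℝ} (hp : ∀ ω, 0 ≤ p ω) (X : Ω → α) (Y : Ω → β) :
    Hent p Y ≤ Hent p (fun ω => (X ω, Y ω)) := by
  have h1 : Hent p Y = ∑ y, Real.negMulLog (∑ x, pr p (fun ω => (X ω, Y ω)) (x, y)) := by
    rw [Hent]
    exact Finset.sum_congr rfl fun y _ => by rw [marg_snd p X Y y]
  rw [h1, Hent_pair]
  exact core_pair (fun x y => pr p (fun ω => (X ω, Y ω)) (x, y))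
    (fun x y => pr_nonneg hp _ _)

private lemma Hent_add [Fintype α] [Fintype β] [DecidableEq α] [DecidableEq β]
    {p : Ω → ℝ} (hp : IsPMF p) (X : Ω → α) (Y : Ω → β) :
    Hent p (fun ω => (X ω, Y ω)) ≤ Hent p X + Hent p Y := by
  have core := core_nonneg (γ := Unit)
    (fun x y _ => pr p (fun ω => (X ω, Y ω)) (x, y))
    (fun x y _ => pr_nonneg hp.1 _ _)
  simp only [Finset.univ_unique, Finset.sum_singleton] at core
  have htot : ∑ x, ∑ y, pr p (fun ω => (X ω, Y ω)) (x, y) = 1 := by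
    rw [← Fintype.sum_prod_type]
    exact pr_sum_eq_one hp _
  rw [htot, Real.negMulLog_one] at core
  have hX : Hent p X = ∑ x, Real.negMulLog (∑ y, pr p (fun ω => (X ω, Y ω)) (x, y)) := by
    rw [Hent]
    exact Finset.sum_congr rfl fun x _ => by rw [marg_fst p X Y x]
  have hY : Hent p Y = ∑ y, Real.negMulLog (∑ x, pr p (fun ω => (X ω, Y ω)) (x, y)) := by
    rw [Hent]
    exact Finset.sum_congr rfl fun y _ => by rw [marg_snd p X Y y]
  rw [hX, hY, Hent_pair]
  linarith [core]

end Bridge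
/-- the main no-go theorem. If `O ⟂ C | (λ, M)` and
`I(C; O | λ) > 0`, then `H(M) ≥ I(C; O | λ) > 0` and `M` is not
almost-surely constant. -/
theorem no_go_single_state {Ω γC γL γM γO : Type} [Fintype Ω] [Fintype γC] [DecidableEq γC]
    [Fintype γL] [DecidableEq γL] [Fintype γM] [DecidableEq γM]
    [Fintype γO] [DecidableEq γO]
    (p : Ω → ℝ) (C : Ω → γC) (L : Ω → γL) (M : Ω → γM) (O : Ω → γO)
    (hp : IsPMF p)
    (hci : CondIndep p O C (fun ω => (L ω, M ω)))
    (hctx : 0 < cmi p C O L) :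
    cmi p C O L ≤ Hent p M ∧ 0 < Hent p M ∧ ¬ ∃ m, pr p M m = 1 := by
  have hp0 : ∀ ω, 0 ≤ p ω := hp.1
  -- relabeling facts
  have g1 : Hent p (fun ω => ((O ω, M ω), L ω)) = Hent p (fun ω => (M ω, L ω, O ω)) := by
    refine Hent_relabel p (fun ω => (M ω, L ω, O ω))
      (fun u => ((u.2.2, u.1), u.2.1)) ?_ _ (fun ω => rfl)
    rintro ⟨a1, a2, a3⟩ ⟨b1, b2, b3⟩ h
    simp only [Prod.mk.injEq] at h ⊢; tauto
  have g2 : Hent p (fun ω => (C ω, (O ω, M ω), L ω))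
      = Hent p (fun ω => (C ω, M ω, L ω, O ω)) := by
    refine Hent_relabel p (fun ω => (C ω, M ω, L ω, O ω))
      (fun u => (u.1, (u.2.2.2, u.2.1), u.2.2.1)) ?_ _ (fun ω => rfl)
    rintro ⟨a1, a2, a3, a4⟩ ⟨b1, b2, b3, b4⟩ h
    simp only [Prod.mk.injEq] at h ⊢; tauto
  have g3 : Hent p (fun ω => (C ω, O ω, L ω)) = Hent p (fun ω => (C ω, L ω, O ω)) := by
    refine Hent_relabel p (fun ω => (C ω, L ω, O ω))
      (fun u => (u.1, u.2.2, u.2.1)) ?_ _ (fun ω => rfl)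
    rintro ⟨a1, a2, a3⟩ ⟨b1, b2, b3⟩ h
    simp only [Prod.mk.injEq] at h ⊢; tauto
  have g4 : Hent p (fun ω => (O ω, L ω)) = Hent p (fun ω => (L ω, O ω)) := by
    refine Hent_relabel p (fun ω => (L ω, O ω)) (fun u => (u.2, u.1)) ?_ _ (fun ω => rfl)
    rintro ⟨a1, a2⟩ ⟨b1, b2⟩ h
    simp only [Prod.mk.injEq] at h ⊢; tauto
  have g5 : Hent p (fun ω => (M ω, L ω)) = Hent p (fun ω => (L ω, M ω)) := by
    refine Hent_relabel p (fun ω => (L ω, M ω)) (fun u => (u.2, u.1)) ?_ _ (fun ω => rfl)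
    rintro ⟨a1, a2⟩ ⟨b1, b2⟩ h
    simp only [Prod.mk.injEq] at h ⊢; tauto
  have g6 : Hent p (fun ω => (C ω, M ω, L ω)) = Hent p (fun ω => (C ω, L ω, M ω)) := by
    refine Hent_relabel p (fun ω => (C ω, L ω, M ω))
      (fun u => (u.1, u.2.2, u.2.1)) ?_ _ (fun ω => rfl)
    rintro ⟨a1, a2, a3⟩ ⟨b1, b2, b3⟩ h
    simp only [Prod.mk.injEq] at h ⊢; tauto
  have g7 : Hent p (fun ω => ((O ω, M ω), L ω)) = Hent p (fun ω => (O ω, L ω, M ω)) := by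
    refine Hent_relabel p (fun ω => (O ω, L ω, M ω))
      (fun u => ((u.1, u.2.2), u.2.1)) ?_ _ (fun ω => rfl)
    rintro ⟨a1, a2, a3⟩ ⟨b1, b2, b3⟩ h
    simp only [Prod.mk.injEq] at h ⊢; tauto
  have g8 : Hent p (fun ω => (C ω, (O ω, M ω), L ω))
      = Hent p (fun ω => (C ω, O ω, L ω, M ω)) := by
    refine Hent_relabel p (fun ω => (C ω, O ω, L ω, M ω))
      (fun u => (u.1, (u.2.1, u.2.2.2), u.2.2.1)) ?_ _ (fun ω => rfl)
    rintro ⟨a1, a2, a3, a4⟩ ⟨b1, b2, b3, b4⟩ h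
    simp only [Prod.mk.injEq] at h ⊢; tauto
  have g9 : Hent p (fun ω => (M ω, (C ω, L ω))) = Hent p (fun ω => (C ω, M ω, L ω)) := by
    refine Hent_relabel p (fun ω => (C ω, M ω, L ω))
      (fun u => (u.2.1, (u.1, u.2.2))) ?_ _ (fun ω => rfl)
    rintro ⟨a1, a2, a3⟩ ⟨b1, b2, b3⟩ h
    simp only [Prod.mk.injEq] at h ⊢; tauto
  -- CMI expansions
  have hE1a := cmi_expand p C (fun ω => (O ω, M ω)) L
  have hE1b := cmi_expand p C O L
  have hE1c := cmi_expand p C M (fun ω => (L ω, O ω))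
  have hE2a := cmi_expand p C M L
  have hE2b := cmi_expand p C O (fun ω => (L ω, M ω))
  have hzero : cmi p C O (fun ω => (L ω, M ω)) = 0 :=
    cmi_eq_zero hp0 C O _ (condIndep_symm hci)
  have hnn : 0 ≤ cmi p C M (fun ω => (L ω, O ω)) := cmi_nonneg' hp0 C M _
  have hsub : Hent p (fun ω => (M ω, L ω)) ≤ Hent p M + Hent p L := Hent_add hp M L
  have hsl : Hent p (fun ω => (C ω, L ω)) ≤ Hent p (fun ω => (M ω, (C ω, L ω))) :=
    Hent_snd_le hp0 M (fun ω => (C ω, L ω))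
  have main : cmi p C O L ≤ Hent p M := by
    linarith [g1, g2, g3, g4, g5, g6, g7, g8, g9, hE1a, hE1b, hE1c, hE2a, hE2b,
      hzero, hnn, hsub, hsl]
  refine ⟨main, lt_of_lt_of_le hctx main, ?_⟩
  rintro ⟨m, hm⟩
  have hsum := pr_sum_eq_one hp M
  have hrest : ∑ x ∈ Finset.univ.erase m, pr p M x = 0 := by
    have h := Finset.add_sum_erase Finset.univ (pr p M) (Finset.mem_univ m)
    rw [hm] at h
    linarith [h, hsum]
  have h0 : ∀ x ∈ Finset.univ.erase m, pr p M x = 0 := by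
    intro x hx
    exact (Finset.sum_eq_zero_iff_of_nonneg
      (fun i _ => pr_nonneg hp0 M i)).1 hrest x hx
  have hHM : Hent p M = 0 := by
    rw [Hent, ← Finset.add_sum_erase Finset.univ _ (Finset.mem_univ m), hm,
      Real.negMulLog_one, zero_add]
    refine Finset.sum_eq_zero fun x hx => ?_
    rw [h0 x hx, Real.negMulLog_zero]
  have hpos : 0 < Hent p M := lt_of_lt_of_le hctx main
  linarith
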